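/- arXiv:2503.10353 — 4 statements merged into one kernel-verified Lean document; each statement's English description precedes it below -/
import Mathlib

section
/- Let L : C → C' and R : C' → C be an adjoint pair (L ⊣ R), and let A, B be objects of C and A', B' objects of C'. Then the following are equivalent: (i) for all X in C, (Hom(X, A) nonempty implies Hom(L X, A') nonempty) and (Hom(L X, B') nonempty implies Hom(X, B) nonempty); (ii) Hom(A, R A') is nonempty and Hom(R B', B) is nonempty. -/
open CategoryTheory

universe u v u' v'

/-- Given an adjunction `L ⊣ R` and objects `A, B` of `C`, `A', B'` of `C'`, the functor `L`
is a valid reduction from `PCSP(A,B)` to `PCSP(A',B')` (it preserves Yes-instances and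
reflects No-instances) if and only if there are morphisms `A ⟶ R A'` and `R B' ⟶ B`. -/
theorem stmt3 {C : Type u} [Category.{v} C] {C' : Type u'} [Category.{v'} C']
    (L : C ⥤ C') (R : C' ⥤ C) (adj : L ⊣ R) (A B : C) (A' B' : C') :
    (∀ X : C, (Nonempty (X ⟶ A) → Nonempty (L.obj X ⟶ A')) ∧
        (Nonempty (L.obj X ⟶ B') → Nonempty (X ⟶ B)))
      ↔ (Nonempty (A ⟶ R.obj A') ∧ Nonempty (R.obj B' ⟶ B)) := by
  constructor
  · intro h
    constructor
    · obtain ⟨f⟩ := (h A).1 ⟨𝟙 A⟩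
      exact ⟨adj.homEquiv A A' f⟩
    · obtain ⟨f⟩ := (h (R.obj B')).2 ⟨(adj.homEquiv _ _).symm (𝟙 _)⟩
      exact ⟨f⟩
  · rintro ⟨⟨f⟩, ⟨g⟩⟩ X
    constructor
    · rintro ⟨u⟩
      exact ⟨(adj.homEquiv X A').symm (u ≫ f)⟩
    · rintro ⟨u⟩
      exact ⟨adj.homEquiv X B' u ≫ g⟩
end

section
/- Let A, B : S → Type and A', B' : T → Type be copresheaves on small categories with natural transformations α : A → B and α' : A' → B'. If there exists a natural transformation Ran_{A'} B' → Ran_A B, then for every copresheaf X : S → Type: (i) if Hom(X, A) is nonempty, then Hom((Lan_A X) ∘ A', A') is nonempty; and (ii) if Hom((Lan_A X) ∘ A', B') is nonempty, then Hom(X, B) is nonempty. That is, X ↦ (Lan_A X) ∘ A' is a valid reduction from PCSP(A,B) to PCSP(A',B'). -/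
/-!
A map `X ⟶ A` is, by `Lan_A ⊣ (− ∘ A)`, the same as a map `Lan_A X ⟶ 𝟭`, and whiskering it
by `A'` gives `(Lan_A X) ∘ A' ⟶ A'`. Conversely, for any `F`, a map `F ∘ A' ⟶ B'` transposes
to `F ⟶ Ran_{A'} B'`; composing with `ρ` and transposing back along `(− ∘ A) ⊣ Ran_A` gives
`F ∘ A ⟶ B`. For `F = Lan_A X`, precomposing with the unit `X ⟶ (Lan_A X) ∘ A` yields `X ⟶ B`.
-/

open CategoryTheory

universe u

namespace CategoryTheory

variable {S T C D : Type*} [Category S] [Category T] [Category C] [Category D]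

def lanObjToIdOfHom {A : S ⥤ C} {L : (S ⥤ C) ⥤ (C ⥤ C)}
    (adjL : L ⊣ (Functor.whiskeringLeft S C C).obj A) {X : S ⥤ C} (f : X ⟶ A) :
    L.obj X ⟶ 𝟭 C :=
  (adjL.homEquiv X (𝟭 C)).symm (f ≫ A.rightUnitor.inv)

def precompHomOfRanHom {A : S ⥤ C} {B : S ⥤ D} {A' : T ⥤ C} {B' : T ⥤ D}
    {RanS : (S ⥤ D) ⥤ (C ⥤ D)} {RanT : (T ⥤ D) ⥤ (C ⥤ D)}
    (adjS : (Functor.whiskeringLeft S C D).obj A ⊣ RanS)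
    (adjT : (Functor.whiskeringLeft T C D).obj A' ⊣ RanT)
    (ρ : RanT.obj B' ⟶ RanS.obj B) {F : C ⥤ D} (h : A' ⋙ F ⟶ B') : A ⋙ F ⟶ B :=
  (adjS.homEquiv F B).symm (adjT.homEquiv F B' h ≫ ρ)

end CategoryTheory

theorem stmt12_general {S : Type u} [SmallCategory S] {T : Type u} [SmallCategory T]
    (A B : S ⥤ Type u) (A' B' : T ⥤ Type u)
    (L : (S ⥤ Type u) ⥤ (Type u ⥤ Type u))
    (adjL : L ⊣ (Functor.whiskeringLeft S (Type u) (Type u)).obj A)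
    (RanS : (S ⥤ Type u) ⥤ (Type u ⥤ Type u))
    (adjS : (Functor.whiskeringLeft S (Type u) (Type u)).obj A ⊣ RanS)
    (RanT : (T ⥤ Type u) ⥤ (Type u ⥤ Type u))
    (adjT : (Functor.whiskeringLeft T (Type u) (Type u)).obj A' ⊣ RanT)
    (ρ : RanT.obj B' ⟶ RanS.obj B) :
    ∀ X : S ⥤ Type u,
      (Nonempty (X ⟶ A) → Nonempty ((A' ⋙ L.obj X) ⟶ A')) ∧
      (Nonempty ((A' ⋙ L.obj X) ⟶ B') → Nonempty (X ⟶ B)) :=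
  fun X =>
    ⟨fun ⟨f⟩ => ⟨Functor.whiskerLeft A' (lanObjToIdOfHom adjL f) ≫ A'.rightUnitor.hom⟩,
      fun ⟨h⟩ => ⟨adjL.unit.app X ≫ precompHomOfRanHom adjS adjT ρ h⟩⟩

/-- Let `(A,B)` and `(A',B')` be promise templates (copresheaves with `α : A ⟶ B`,
`α' : A' ⟶ B'`), let `L = Lan_A` be a left adjoint to precomposition `(− ∘ A)` and let
`RanS`, `RanT` be the right adjoints to precomposition along `A` and `A'` respectively.
If there is a natural transformation `Ran_{A'} B' ⟶ Ran_A B`, then `X ↦ (Lan_A X) ∘ A'`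
is a valid reduction from `PCSP(A,B)` to `PCSP(A',B')`: it preserves Yes-instances and
reflects No-instances. -/
theorem stmt12 {S : Type u} [SmallCategory S] {T : Type u} [SmallCategory T]
    (A B : S ⥤ Type u) (α : A ⟶ B) (A' B' : T ⥤ Type u) (α' : A' ⟶ B')
    (L : (S ⥤ Type u) ⥤ (Type u ⥤ Type u))
    (adjL : L ⊣ (Functor.whiskeringLeft S (Type u) (Type u)).obj A)
    (RanS : (S ⥤ Type u) ⥤ (Type u ⥤ Type u))
    (adjS : (Functor.whiskeringLeft S (Type u) (Type u)).obj A ⊣ RanS)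
    (RanT : (T ⥤ Type u) ⥤ (Type u ⥤ Type u))
    (adjT : (Functor.whiskeringLeft T (Type u) (Type u)).obj A' ⊣ RanT)
    (ρ : RanT.obj B' ⟶ RanS.obj B) :
    ∀ X : S ⥤ Type u,
      (Nonempty (X ⟶ A) → Nonempty ((A' ⋙ L.obj X) ⟶ A')) ∧
      (Nonempty ((A' ⋙ L.obj X) ⟶ B') → Nonempty (X ⟶ B)) :=
  stmt12_general A B A' B' L adjL RanS adjS RanT adjT ρ
end

section
/- Let S be a small category, A : S → Type a copresheaf, and X : S → Type another copresheaf. Then the functor X ↦ Λ(A ∘ π_X) (where π_X : ∫X → S is the category-of-elements projection and Λ(D) = colim(yoneda ∘ D^op) for D : J → Type, with yoneda : Type^op → [Type,Type], N ↦ (−)^N) is left adjoint to the precomposition functor M ↦ M ∘ A from [Type, Type] to [S, Type]; hence Λ(A ∘ π_X) ≅ Lan_A X. -/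
open CategoryTheory CategoryTheory.Limits Opposite

universe u

/-! Morphisms `Λ(A ∘ π_X) ⟶ M` out of a colimit of corepresentables are, by the Yoneda lemma,
compatible families `(M (A s))_{(s, x) ∈ ∫X}`, i.e. sections of `M ∘ A ∘ π_X`; and sections of a
functor on `∫X` are exactly natural transformations `X ⟶ M ∘ A`. Both bijections are natural
in `M`, so `X ↦ Λ(A ∘ π_X)` is left adjoint to `M ↦ M ∘ A`. -/

namespace CategoryTheory.Functor

section

variable {J : Type*} [Category* J] {C : Type*} [Category.{u} C]

def opCoyonedaHomEquivSections (D : J ⥤ C) (M : C ⥤ Type u) :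
    (D.op ⋙ coyoneda ⟶ (Functor.const Jᵒᵖ).obj M) ≃ (D ⋙ M).sections where
  toFun τ := ⟨fun j => coyonedaEquiv (τ.app (op j)), fun {j j'} g => by
    have := τ.naturality g.op
    dsimp at this ⊢
    rw [coyonedaEquiv_naturality, this, Category.comp_id]⟩
  invFun s :=
    { app j := coyonedaEquiv.symm (s.val j.unop)
      naturality j j' g := by
        dsimp
        rw [Category.comp_id, ← s.prop g.unop]
        exact (coyonedaEquiv_symm_map _ _).symm }
  left_inv τ := by ext j : 2; simp
  right_inv s := by ext j; simp

noncomputable def colimitOpCoyonedaHomEquivSections (D : J ⥤ C) [HasColimit (D.op ⋙ coyoneda)]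
    (M : C ⥤ Type u) : (colimit (D.op ⋙ coyoneda) ⟶ M) ≃ (D ⋙ M).sections :=
  (colimit.isColimit _).homEquiv.trans (D.opCoyonedaHomEquivSections M)

end

section

variable {C : Type*} [Category* C]

def elementsSectionsEquivHom (X F : C ⥤ Type u) :
    (CategoryOfElements.π X ⋙ F).sections ≃ (X ⟶ F) where
  toFun s :=
    { app c := TypeCat.ofHom fun x => s.val (X.elementsMk c x)
      naturality c c' g := by
        ext x
        exact (s.prop
          (CategoryOfElements.homMk (X.elementsMk c x) (X.elementsMk c' (X.map g x)) g rfl)).symm }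
  invFun η := ⟨fun p => η.app p.1 p.2, fun {p q} g => by
    dsimp
    rw [← g.prop]
    exact (NatTrans.naturality_apply η _ _).symm⟩
  left_inv s := rfl
  right_inv η := rfl

end

end CategoryTheory.Functor

section

open Functor

variable {S : Type u} [SmallCategory S] (A : S ⥤ Type u)

noncomputable def colimitElementsHomEquiv (X : S ⥤ Type u) (M : Type u ⥤ Type u) :
    (colimit ((CategoryOfElements.π X ⋙ A).op ⋙ coyoneda) ⟶ M) ≃
      (X ⟶ ((whiskeringLeft S (Type u) (Type u)).obj A).obj M) :=
  ((CategoryOfElements.π X ⋙ A).colimitOpCoyonedaHomEquivSections M).trans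
    (X.elementsSectionsEquivHom (A ⋙ M))

lemma colimitElementsHomEquiv_comp (X : S ⥤ Type u) (M M' : Type u ⥤ Type u) (g : M ⟶ M')
    (f : colimit ((CategoryOfElements.π X ⋙ A).op ⋙ coyoneda) ⟶ M) :
    colimitElementsHomEquiv A X M' (f ≫ g) =
      colimitElementsHomEquiv A X M f ≫ ((whiskeringLeft S (Type u) (Type u)).obj A).map g := by
  ext s x
  exact coyonedaEquiv_comp
    (colimit.ι ((CategoryOfElements.π X ⋙ A).op ⋙ coyoneda) (op (X.elementsMk s x)) ≫ f) g

end

/-- For a copresheaf `A : S ⥤ Type` on a small category `S`, the assignment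
`X ↦ Λ(A ∘ π_X) = colim ((π_X ⋙ A)ᵒᵖ ⋙ (N ↦ (−)^N))` extends to a functor
`(S ⥤ Type) ⥤ (Type ⥤ Type)` which is left adjoint to the precomposition functor
`M ↦ M ∘ A`; hence `Λ(A ∘ π_X) ≅ Lan_A X`. -/
theorem stmt17 {S : Type u} [SmallCategory S] (A : S ⥤ Type u) :
    ∃ L : (S ⥤ Type u) ⥤ (Type u ⥤ Type u),
      (∀ X : S ⥤ Type u,
        Nonempty (L.obj X ≅ colimit ((CategoryOfElements.π X ⋙ A).op ⋙ coyoneda))) ∧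
      Nonempty (L ⊣ (Functor.whiskeringLeft S (Type u) (Type u)).obj A) :=
  ⟨Adjunction.leftAdjointOfEquiv (colimitElementsHomEquiv A) (colimitElementsHomEquiv_comp A),
    fun _ => ⟨Iso.refl _⟩, ⟨Adjunction.adjunctionOfEquivLeft _ _⟩⟩
end

section
/- Let K_3 : D → Type be the copresheaf on the two-object category D (objects E, V with morphisms s, t : E → V) encoding the 3-clique: K_3(V) = {0,1,2}, K_3(E) = all ordered pairs of distinct elements, with s, t the projections. Then there is no natural transformation Ran_{K_3} K_3 → id; equivalently, there is no n and no natural transformation (graph homomorphism) h : K_3^n → K_3 arising from a projection-free symmetric combination—concretely, there is no graph homomorphism σ : K_3^6 → K_3 satisfying σ(x,y,z,x,y,z) = σ(y,z,x,z,x,y) for all x,y,z ∈ {0,1,2}. -/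
/-!
A natural transformation `φ : Ran_F F ⟶ 𝟭` picks, for every `ρ ∈ (Ran_F F)(X)`, a point `φ ρ ∈ X`,
and by naturality `φ ρ` is a fixed point of every `f : X → X` that fixes `ρ`. When `F` takes finite
values, every ultrafilter `U` on `X` gives a morphism `F^X ⟶ F` (the limit along `U`), hence an
element `ρ_U` of `(Ran_F F)(X)`, and `ρ_U` is fixed by every `f` with `U.map f = U`. Taking a
non-principal `U`, the map moving only the point `φ ρ_U` is such an `f`: contradiction.

For the Siggers identity, `σ` maps the edge of `K₃⁶` with source `(0,1,2,0,1,2)` and target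
`(1,2,0,2,0,1)` to an edge of `K₃`, whose endpoints are distinct since `K₃` has no loops.
-/

open CategoryTheory CategoryTheory.Limits Opposite

/-- The copresheaf on the two-object category `E ⇉ V` (realized as `WalkingParallelPair`
with `E = zero`, `V = one`) encoding the directed 3-clique: vertices `Fin 3`, edges all
ordered pairs of distinct vertices, with `s, t` the two projections. -/
def K3 : WalkingParallelPair ⥤ Type :=
  parallelPair (TypeCat.ofHom (fun e : {p : Fin 3 × Fin 3 // p.1 ≠ p.2} => e.1.1))
    (TypeCat.ofHom (fun e : {p : Fin 3 × Fin 3 // p.1 ≠ p.2} => e.1.2))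

universe u

namespace Ultrafilter

variable {X α β : Type*} [Finite α] [Finite β]

noncomputable def limOfFinite (U : Ultrafilter X) (v : X → α) : α :=
  (eq_pure_of_finite (U.map v)).choose

theorem map_eq_pure_limOfFinite (U : Ultrafilter X) (v : X → α) :
    U.map v = pure (U.limOfFinite v) :=
  (eq_pure_of_finite (U.map v)).choose_spec

theorem limOfFinite_comp (U : Ultrafilter X) (v : X → α) (g : α → β) :
    U.limOfFinite (g ∘ v) = g (U.limOfFinite v) := by
  apply pure_injective
  rw [← map_eq_pure_limOfFinite, ← map_pure, ← map_eq_pure_limOfFinite, map_map]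

theorem limOfFinite_map (U : Ultrafilter X) (f : X → X) (v : X → α) :
    (U.map f).limOfFinite v = U.limOfFinite (v ∘ f) := by
  apply pure_injective
  rw [← map_eq_pure_limOfFinite, ← map_eq_pure_limOfFinite, map_map]

theorem map_eq_self_of_eventuallyEq_id {U : Ultrafilter X} {f : X → X} (hf : f =ᶠ[U] id) :
    U.map f = U :=
  coe_injective <| by rw [coe_map, Filter.map_congr hf, Filter.map_id]

end Ultrafilter

section

variable {C : Type*} [Category C]

noncomputable def ultrafilterLimit (F : C ⥤ Type u) [∀ c, Finite (F.obj c)] {X : Type u}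
    (U : Ultrafilter X) : F ⋙ coyoneda.obj (op X) ⟶ F where
  app c := TypeCat.ofHom fun v : X ⟶ F.obj c => U.limOfFinite v
  naturality c d g := by
    ext (v : X ⟶ F.obj c)
    exact U.limOfFinite_comp v (F.map g)

theorem whiskerLeft_coyoneda_map_comp_ultrafilterLimit (F : C ⥤ Type u) [∀ c, Finite (F.obj c)]
    {X : Type u} (U : Ultrafilter X) (f : X → X) :
    Functor.whiskerLeft F (coyoneda.map (TypeCat.ofHom f).op) ≫ ultrafilterLimit F U =
      ultrafilterLimit F (U.map f) := by
  ext c (v : X ⟶ F.obj c)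
  exact (U.limOfFinite_map f v).symm

theorem CategoryTheory.Adjunction.map_homEquiv_app_id {K G : C ⥤ Type u}
    {Ran : (C ⥤ Type u) ⥤ (Type u ⥤ Type u)}
    (adj : (Functor.whiskeringLeft C (Type u) (Type u)).obj K ⊣ Ran) {X : Type u}
    (σ : K ⋙ coyoneda.obj (Opposite.op X) ⟶ G) (f : X ⟶ X) :
    (Ran.obj G).map f ((adj.homEquiv _ G σ).app X (𝟙 X)) =
      (adj.homEquiv _ G (Functor.whiskerLeft K (coyoneda.map f.op) ≫ σ)).app X (𝟙 X) := by
  have hnat := adj.homEquiv_naturality_left (coyoneda.map f.op) σ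
  simp only [Functor.whiskeringLeft_obj_map] at hnat
  rw [hnat]
  simpa using (NatTrans.naturality_apply ((adj.homEquiv _ G) σ) f (𝟙 X)).symm

theorem not_nonempty_ran_obj_hom_id (F : C ⥤ Type u) [∀ c, Finite (F.obj c)]
    {Ran : (C ⥤ Type u) ⥤ (Type u ⥤ Type u)}
    (adj : (Functor.whiskeringLeft C (Type u) (Type u)).obj F ⊣ Ran) :
    ¬ Nonempty (Ran.obj F ⟶ 𝟭 _) := by
  rintro ⟨φ⟩
  let U := Filter.hyperfilter (ULift.{u} ℕ)
  let ρ := (adj.homEquiv _ F (ultrafilterLimit F U)).app _ (𝟙 _)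
  let x₀ : ULift ℕ := φ.app _ ρ
  obtain ⟨y, hy⟩ := exists_ne x₀
  let f := Function.update id x₀ y
  have hfU : U.map f = U := by
    refine Ultrafilter.map_eq_self_of_eventuallyEq_id ?_
    filter_upwards [(Set.finite_singleton x₀).compl_mem_hyperfilter] with x hx
    exact Function.update_of_ne hx _ _
  have hρ : (Ran.obj F).map (TypeCat.ofHom f) ρ = ρ := by
    rw [adj.map_homEquiv_app_id, whiskerLeft_coyoneda_map_comp_ultrafilterLimit, hfU]
  have hfix : f x₀ = x₀ := by
    simpa [hρ, x₀] using (NatTrans.naturality_apply φ (TypeCat.ofHom f) ρ).symm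
  exact hy (by simpa [f] using hfix)

end

instance (j : WalkingParallelPair) : Finite (K3.obj j) := by
  cases j <;> dsimp [K3] <;> infer_instance

theorem K3.app_src_ne_app_tgt {X : Type} (σ : K3 ⋙ coyoneda.obj (op X) ⟶ K3)
    (e : X ⟶ K3.obj .zero) :
    σ.app .one (e ≫ K3.map .left) ≠ σ.app .one (e ≫ K3.map .right) := by
  intro h
  have hsrc := NatTrans.naturality_apply σ WalkingParallelPairHom.left e
  have htgt := NatTrans.naturality_apply σ WalkingParallelPairHom.right e
  exact (σ.app .zero e).2 (hsrc.symm.trans (h.trans htgt))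

/-- There is no natural transformation `Ran_{K₃} K₃ ⟶ id` (for `Ran` any right adjoint to
precomposition with `K₃`); concretely, there is no graph homomorphism (natural
transformation) `σ : K₃^6 ⟶ K₃` satisfying the Siggers identity
`σ(x,y,z,x,y,z) = σ(y,z,x,z,x,y)` for all `x, y, z ∈ Fin 3`. -/
theorem stmt18 :
    (∀ (Ran : (WalkingParallelPair ⥤ Type) ⥤ (Type ⥤ Type)),
      ((Functor.whiskeringLeft WalkingParallelPair Type Type).obj K3 ⊣ Ran) →
        ¬ Nonempty (Ran.obj K3 ⟶ 𝟭 Type)) ∧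
    ¬ ∃ σ : (K3 ⋙ coyoneda.obj (op (Fin 6))) ⟶ K3,
        ∀ x y z : Fin 3,
          σ.app WalkingParallelPair.one (TypeCat.ofHom ![x, y, z, x, y, z])
            = σ.app WalkingParallelPair.one (TypeCat.ofHom ![y, z, x, z, x, y]) := by
  refine ⟨fun _ adj => not_nonempty_ran_obj_hom_id K3 adj, ?_⟩
  rintro ⟨σ, hσ⟩
  let e : Fin 6 ⟶ K3.obj .zero := TypeCat.ofHom
    ![⟨(0, 1), by decide⟩, ⟨(1, 2), by decide⟩, ⟨(2, 0), by decide⟩,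
      ⟨(0, 2), by decide⟩, ⟨(1, 0), by decide⟩, ⟨(2, 1), by decide⟩]
  have hsrc : e ≫ K3.map .left = TypeCat.ofHom ![(0 : Fin 3), 1, 2, 0, 1, 2] := by
    ext i; fin_cases i <;> rfl
  have htgt : e ≫ K3.map .right = TypeCat.ofHom ![(1 : Fin 3), 2, 0, 2, 0, 1] := by
    ext i; fin_cases i <;> rfl
  exact K3.app_src_ne_app_tgt σ e (by rw [hsrc, htgt]; exact hσ 0 1 2)
end
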